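/- arXiv:1306.4431 — 3 statements merged into one kernel-verified Lean document; each statement's English description precedes it below -/
import Mathlib

section
/- Let 0 < l < l*, let α : [0,l*] → ℝ³ be a C² unit-speed curve with unit tangent T = α′, let Q : [0,l*] → ℝ³ be a C¹ unit vector field orthogonal to T at every point, set κ_g = ⟨α″, Q⟩, let μ : [0,l*] → ℝ be C¹, and let β : [0,l*] × (−ε, ε) → ℝ³ be a C² map with β(σ, 0) = α(σ) and (∂β/∂t)(σ, 0) = μ(σ)·Q(σ) for all σ. Suppose λ : (−ε, ε) → (0, l*] is differentiable, λ(0) = l, and ∫₀^{λ(t)} ‖(∂β/∂σ)(σ, t)‖ dσ = l for all t ∈ (−ε, ε). Then dλ/dt at t = 0 equals ∫₀^l μ(s)·κ_g(s) ds. -/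
/-!
Split the constraint as `Φ(t) + ψ(t) = l`, where `Φ(t) = ∫₀ˡ ‖∂σβ(σ,t)‖ dσ` is the length of the
varied arcs over the fixed interval `[0, l]` and `ψ(t) = ∫_l^{λ(t)} ‖∂σβ(σ,t)‖ dσ`. Since `α` has
unit speed, `ψ'(0) = λ'(0)`. Differentiating under the integral sign and exchanging `∂t` and `∂σ`,
the first variation of length is `Φ'(0) = ∫₀ˡ ⟨T, ∂σ(μ Q)⟩ = ∫₀ˡ μ ⟨T, Q'⟩ = -∫₀ˡ μ κ_g`, the last
step by differentiating `⟨T, Q⟩ = 0`. Hence `λ'(0) = -Φ'(0) = ∫₀ˡ μ κ_g`.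
-/

open scoped RealInnerProductSpace
open Set Filter Topology MeasureTheory Asymptotics

section Calculus

theorem HasFDerivWithinAt.hasDerivWithinAt_prodMk_left {𝕜 E : Type*} [NontriviallyNormedField 𝕜]
    [NormedAddCommGroup E] [NormedSpace 𝕜 E] {f : 𝕜 × 𝕜 → E} {f' : 𝕜 × 𝕜 →L[𝕜] E}
    {s t : Set 𝕜} {x y : 𝕜} (hf : HasFDerivWithinAt f f' (s ×ˢ t) (x, y)) (hy : y ∈ t) :
    HasDerivWithinAt (fun x => f (x, y)) (f' (1, 0)) s x :=
  hf.comp_hasDerivWithinAt x ((hasDerivAt_id x).prodMk (hasDerivAt_const x y)).hasDerivWithinAt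
    fun x' hx => show (x', y) ∈ s ×ˢ t from ⟨hx, hy⟩

theorem HasFDerivWithinAt.hasDerivWithinAt_prodMk_right {𝕜 E : Type*} [NontriviallyNormedField 𝕜]
    [NormedAddCommGroup E] [NormedSpace 𝕜 E] {f : 𝕜 × 𝕜 → E} {f' : 𝕜 × 𝕜 →L[𝕜] E}
    {s t : Set 𝕜} {x y : 𝕜} (hf : HasFDerivWithinAt f f' (s ×ˢ t) (x, y)) (hx : x ∈ s) :
    HasDerivWithinAt (fun y => f (x, y)) (f' (0, 1)) t y :=
  hf.comp_hasDerivWithinAt y ((hasDerivAt_const y x).prodMk (hasDerivAt_id y)).hasDerivWithinAt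
    fun y' hy => show (x, y') ∈ s ×ˢ t from ⟨hx, hy⟩

theorem HasDerivAt.norm_of_ne_zero {E : Type*} [NormedAddCommGroup E] [InnerProductSpace ℝ E]
    {f : ℝ → E} {f' : E} {x : ℝ} (hf : HasDerivAt f f' x) (h0 : f x ≠ 0) :
    HasDerivAt (fun y => ‖f y‖) (⟪f x, f'⟫ / ‖f x‖) x := by
  have h := hf.norm_sq.sqrt (by positivity)
  simp only [Real.sqrt_sq (norm_nonneg _)] at h
  convert h using 1
  ring

theorem IsCompact.eventually_forall_mem_of_continuousOn_prod {X Y Z : Type*} [TopologicalSpace X]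
    [TopologicalSpace Y] [TopologicalSpace Z] {f : X × Y → Z} {K : Set X} {I : Set Y} {U : Set Z}
    {y₀ : Y} (hK : IsCompact K) (hI : I ∈ 𝓝 y₀) (hf : ContinuousOn f (K ×ˢ I)) (hU : IsOpen U)
    (hfU : ∀ x ∈ K, f (x, y₀) ∈ U) : ∀ᶠ y in 𝓝 y₀, ∀ x ∈ K, f (x, y) ∈ U := by
  have hloc : ∀ x ∈ K, ∀ᶠ z : Y × X in 𝓝 (y₀, x), (z.2, z.1) ∈ K ×ˢ I → f (z.2, z.1) ∈ U := by
    intro x hx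
    have := eventually_nhdsWithin_iff.1
      ((hf (x, y₀) ⟨hx, mem_of_mem_nhds hI⟩).preimage_mem_nhdsWithin (hU.mem_nhds (hfU x hx)))
    exact (continuous_swap.tendsto (y₀, x)).eventually this
  filter_upwards [hK.eventually_forall_of_forall_eventually
    (P := fun y x => (x, y) ∈ K ×ˢ I → f (x, y) ∈ U) hloc, hI] with y hy hyI x hx
  exact hy x hx ⟨hx, hyI⟩

end Calculus

section ParametricIntegral

variable {E : Type*} [NormedAddCommGroup E] [NormedSpace ℝ E]

theorem hasDerivAt_intervalIntegral_of_continuousOn {F F' : ℝ × ℝ → E} {a b t₀ : ℝ} {I : Set ℝ}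
    (hI : I ∈ 𝓝 t₀) (hF : ContinuousOn F (uIcc a b ×ˢ I))
    (hF' : ContinuousOn F' (uIcc a b ×ˢ I))
    (hderiv : ∀ σ ∈ uIcc a b, ∀ t ∈ I, HasDerivAt (fun t => F (σ, t)) (F' (σ, t)) t) :
    HasDerivAt (fun t => ∫ σ in a..b, F (σ, t)) (∫ σ in a..b, F' (σ, t₀)) t₀ := by
  obtain ⟨δ, hδ, hδI⟩ := Metric.nhds_basis_closedBall.mem_iff.1 hI
  obtain ⟨M, hM⟩ := (isCompact_uIcc.prod (isCompact_closedBall t₀ δ)).exists_bound_of_continuousOn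
    (hF'.mono (prod_mono subset_rfl hδI))
  have slice : ∀ {G : ℝ × ℝ → E}, ContinuousOn G (uIcc a b ×ˢ I) → ∀ t ∈ I,
      ContinuousOn (fun σ => G (σ, t)) (uIcc a b) := fun hG t ht =>
    hG.comp (continuousOn_id.prodMk continuousOn_const) fun σ hσ => ⟨hσ, ht⟩
  have ht₀ : t₀ ∈ I := mem_of_mem_nhds hI
  refine (intervalIntegral.hasDerivAt_integral_of_dominated_loc_of_deriv_le (bound := fun _ => M)
    (F := fun t σ => F (σ, t)) (F' := fun t σ => F' (σ, t)) (Metric.ball_mem_nhds t₀ hδ) ?_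
    ((slice hF t₀ ht₀).intervalIntegrable)
    (((slice hF' t₀ ht₀).mono uIoc_subset_uIcc).aestronglyMeasurable measurableSet_uIoc) ?_
    intervalIntegrable_const ?_).2
  · filter_upwards [hI] with t ht
    exact ((slice hF t ht).mono uIoc_subset_uIcc).aestronglyMeasurable measurableSet_uIoc
  · exact Eventually.of_forall fun σ hσ t ht =>
      hM _ ⟨uIoc_subset_uIcc hσ, Metric.ball_subset_closedBall ht⟩
  · exact Eventually.of_forall fun σ hσ t ht =>
      hderiv σ (uIoc_subset_uIcc hσ) t (hδI (Metric.ball_subset_closedBall ht))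

theorem hasDerivAt_intervalIntegral_upper_of_continuousAt [CompleteSpace E] {g : ℝ × ℝ → E}
    {u : ℝ → ℝ} {t₀ u' : ℝ} (hu : HasDerivAt u u' t₀) (hg : ContinuousAt g (u t₀, t₀))
    (hint : ∀ᶠ t in 𝓝 t₀, IntervalIntegrable (fun σ => g (σ, t)) volume (u t₀) (u t)) :
    HasDerivAt (fun t => ∫ σ in u t₀..u t, g (σ, t)) (u' • g (u t₀, t₀)) t₀ := by
  set x := u t₀
  set g₀ := g (x, t₀)
  have hrem : (fun t => (∫ σ in x..u t, g (σ, t)) - (u t - x) • g₀) =o[𝓝 t₀] fun t => u t - x := by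
    refine IsLittleO.of_bound fun η hη => ?_
    obtain ⟨δ, hδ, hnear⟩ := Metric.eventually_nhds_iff.1
      (hg.eventually (Metric.closedBall_mem_nhds g₀ hη))
    filter_upwards [hint, hu.continuousAt.eventually (Metric.ball_mem_nhds x hδ),
      Metric.ball_mem_nhds t₀ hδ] with t hti hut ht
    rw [← intervalIntegral.integral_const, ← intervalIntegral.integral_sub hti
      intervalIntegrable_const, Real.norm_eq_abs]
    refine intervalIntegral.norm_integral_le_of_norm_le_const fun σ hσ => ?_
    rw [← dist_eq_norm]
    refine hnear (max_lt ?_ ht)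
    rw [dist_comm]
    exact (Real.dist_left_le_of_mem_uIcc (uIoc_subset_uIcc hσ)).trans_lt (dist_comm x _ ▸ hut)
  have hrem' : HasDerivAt (fun t => (∫ σ in x..u t, g (σ, t)) - (u t - x) • g₀) 0 t₀ := by
    rw [hasDerivAt_iff_isLittleO]
    simpa [x] using hrem.trans_isBigO hu.isBigO_sub
  convert ((hu.sub_const x).smul_const g₀).add hrem' using 1
  · ext t
    simp
  · simp

theorem smul_eq_neg_of_intervalIntegral_eq_const [CompleteSpace E] {g : ℝ × ℝ → E} {u : ℝ → ℝ}
    {a t₀ u' : ℝ} {c Φ' : E} (hu : HasDerivAt u u' t₀) (hg : ContinuousAt g (u t₀, t₀))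
    (hint : ∀ᶠ t in 𝓝 t₀, IntervalIntegrable (fun σ => g (σ, t)) volume a (u t₀) ∧
      IntervalIntegrable (fun σ => g (σ, t)) volume (u t₀) (u t))
    (hΦ : HasDerivAt (fun t => ∫ σ in a..u t₀, g (σ, t)) Φ' t₀)
    (hc : ∀ᶠ t in 𝓝 t₀, ∫ σ in a..u t, g (σ, t) = c) :
    u' • g (u t₀, t₀) = -Φ' := by
  have hψ := hasDerivAt_intervalIntegral_upper_of_continuousAt hu hg (hint.mono fun _ h => h.2)
  have hsum : HasDerivAt
      (fun t => (∫ σ in a..u t₀, g (σ, t)) + ∫ σ in u t₀..u t, g (σ, t)) 0 t₀ := by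
    refine (hasDerivAt_const t₀ c).congr_of_eventuallyEq ?_
    filter_upwards [hint, hc] with t ht htc
    rw [intervalIntegral.integral_add_adjacent_intervals ht.1 ht.2, htc]
  rw [eq_neg_iff_add_eq_zero, add_comm]
  exact (hΦ.add hψ).unique hsum

end ParametricIntegral

section PartialDerivatives

variable {E : Type*} [NormedAddCommGroup E] [NormedSpace ℝ E] {a b σ t : ℝ} {I : Set ℝ}

theorem derivWithin_eq_fderivWithin_uncurry {β : ℝ → ℝ → E} (hab : a < b)
    (hβ : DifferentiableOn ℝ (Function.uncurry β) (Icc a b ×ˢ I)) (hσ : σ ∈ Icc a b)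
    (ht : t ∈ I) :
    derivWithin (fun s => β s t) (Icc a b) σ =
      fderivWithin ℝ (Function.uncurry β) (Icc a b ×ˢ I) (σ, t) (1, 0) :=
  ((hβ _ ⟨hσ, ht⟩).hasFDerivWithinAt.hasDerivWithinAt_prodMk_left ht).derivWithin
    (uniqueDiffOn_Icc hab σ hσ)

theorem hasDerivAt_prodMk_right_of_differentiableOn {f : ℝ × ℝ → E} (hI : IsOpen I)
    (hf : DifferentiableOn ℝ f (Icc a b ×ˢ I)) (hσ : σ ∈ Icc a b) (ht : t ∈ I) :
    HasDerivAt (fun t => f (σ, t)) (fderivWithin ℝ f (Icc a b ×ˢ I) (σ, t) (0, 1)) t :=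
  ((hf _ ⟨hσ, ht⟩).hasFDerivWithinAt.hasDerivWithinAt_prodMk_right hσ).hasDerivAt
    (hI.mem_nhds ht)

theorem continuousOn_derivWithin_uncurry {β : ℝ → ℝ → E} (hab : a < b) (hI : IsOpen I)
    (hβ : ContDiffOn ℝ 1 (Function.uncurry β) (Icc a b ×ˢ I)) :
    ContinuousOn (fun p : ℝ × ℝ => derivWithin (fun s => β s p.2) (Icc a b) p.1)
      (Icc a b ×ˢ I) :=
  ((hβ.continuousOn_fderivWithin ((uniqueDiffOn_Icc hab).prod hI.uniqueDiffOn) le_rfl).clm_apply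
    continuousOn_const).congr fun _ hp =>
      derivWithin_eq_fderivWithin_uncurry hab (hβ.differentiableOn one_ne_zero) hp.1 hp.2

theorem derivWithin_deriv_eq_fderivWithin_fderivWithin {β : ℝ → ℝ → E} {t₀ : ℝ} (hab : a < b)
    (hI : IsOpen I) (hβ : ContDiffOn ℝ 2 (Function.uncurry β) (Icc a b ×ˢ I)) (hσ : σ ∈ Icc a b)
    (ht₀ : t₀ ∈ I) :
    derivWithin (fun s => deriv (fun t => β s t) t₀) (Icc a b) σ =
      fderivWithin ℝ (fderivWithin ℝ (Function.uncurry β) (Icc a b ×ˢ I)) (Icc a b ×ˢ I)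
        (σ, t₀) (0, 1) (1, 0) := by
  set P := Icc a b ×ˢ I
  have hP : UniqueDiffOn ℝ P := (uniqueDiffOn_Icc hab).prod hI.uniqueDiffOn
  set Df := fderivWithin ℝ (Function.uncurry β) P
  have hDf : DifferentiableOn ℝ Df P :=
    (hβ.fderivWithin hP (by norm_num)).differentiableOn one_ne_zero
  have hsnd : EqOn (fun s => deriv (fun t => β s t) t₀) (fun s => Df (s, t₀) (0, 1)) (Icc a b) :=
    fun s hs => (hasDerivAt_prodMk_right_of_differentiableOn hI
      (hβ.differentiableOn (by norm_num)) hs ht₀).deriv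
  have hmixed : HasDerivWithinAt (fun s => Df (s, t₀) (0, 1))
      (fderivWithin ℝ Df P (σ, t₀) (1, 0) (0, 1)) (Icc a b) σ := by
    simpa using ((hDf _ ⟨hσ, ht₀⟩).hasFDerivWithinAt.hasDerivWithinAt_prodMk_left ht₀).clm_apply
      (hasDerivWithinAt_const σ _ ((0 : ℝ), (1 : ℝ)))
  have hclosure : (σ, t₀) ∈ closure (interior P) := by
    rw [interior_prod_eq, interior_Icc, hI.interior_eq, closure_prod_eq, closure_Ioo hab.ne]
    exact ⟨hσ, subset_closure ht₀⟩
  rw [derivWithin_congr hsnd (hsnd hσ), hmixed.derivWithin (uniqueDiffOn_Icc hab σ hσ)]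
  exact (hβ.contDiffWithinAt ⟨hσ, ht₀⟩).isSymmSndFDerivWithinAt (by simp) hP hclosure
    ⟨hσ, ht₀⟩ _ _

end PartialDerivatives

section FirstVariation

variable {E : Type*} [NormedAddCommGroup E] [InnerProductSpace ℝ E]

theorem hasDerivAt_integral_norm_of_continuousOn {c w : ℝ × ℝ → E} {a b t₀ : ℝ} {I : Set ℝ}
    (hI : I ∈ 𝓝 t₀) (hc : ContinuousOn c (uIcc a b ×ˢ I)) (hw : ContinuousOn w (uIcc a b ×ˢ I))
    (hderiv : ∀ σ ∈ uIcc a b, ∀ t ∈ I, HasDerivAt (fun t => c (σ, t)) (w (σ, t)) t)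
    (hne : ∀ σ ∈ uIcc a b, c (σ, t₀) ≠ 0) :
    HasDerivAt (fun t => ∫ σ in a..b, ‖c (σ, t)‖)
      (∫ σ in a..b, ⟪c (σ, t₀), w (σ, t₀)⟫ / ‖c (σ, t₀)‖) t₀ := by
  set J := I ∩ {t | ∀ σ ∈ uIcc a b, c (σ, t) ∈ ({0}ᶜ : Set E)}
  have hJ : J ∈ 𝓝 t₀ := inter_mem hI
    (isCompact_uIcc.eventually_forall_mem_of_continuousOn_prod hI hc isOpen_compl_singleton hne)
  have hcJ : ContinuousOn c (uIcc a b ×ˢ J) := hc.mono (prod_mono subset_rfl inter_subset_left)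
  have hwJ : ContinuousOn w (uIcc a b ×ˢ J) := hw.mono (prod_mono subset_rfl inter_subset_left)
  exact hasDerivAt_intervalIntegral_of_continuousOn hJ hcJ.norm
    ((hcJ.inner hwJ).div hcJ.norm fun p hp => norm_ne_zero_iff.2 (hp.2.2 p.1 hp.1))
    fun σ hσ t ht => (hderiv σ hσ t ht.1).norm_of_ne_zero (ht.2 σ hσ)

theorem hasDerivAt_integral_norm_derivWithin {β : ℝ → ℝ → E} {a b x y t₀ : ℝ} {I : Set ℝ}
    (hab : a < b) (hI : IsOpen I) (ht₀ : t₀ ∈ I)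
    (hβ : ContDiffOn ℝ 2 (Function.uncurry β) (Icc a b ×ˢ I)) (hxy : uIcc x y ⊆ Icc a b)
    (hne : ∀ σ ∈ uIcc x y, derivWithin (fun s => β s t₀) (Icc a b) σ ≠ 0) :
    HasDerivAt (fun t => ∫ σ in x..y, ‖derivWithin (fun s => β s t) (Icc a b) σ‖)
      (∫ σ in x..y, ⟪derivWithin (fun s => β s t₀) (Icc a b) σ,
          derivWithin (fun s => deriv (fun t => β s t) t₀) (Icc a b) σ⟫ /
        ‖derivWithin (fun s => β s t₀) (Icc a b) σ‖) t₀ := by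
  set P := Icc a b ×ˢ I
  have hP : UniqueDiffOn ℝ P := (uniqueDiffOn_Icc hab).prod hI.uniqueDiffOn
  set Df := fderivWithin ℝ (Function.uncurry β) P
  have hDf : ContDiffOn ℝ 1 Df P := hβ.fderivWithin hP (by norm_num)
  have hsub : uIcc x y ×ˢ I ⊆ P := prod_mono hxy subset_rfl
  have hvel : ∀ σ ∈ uIcc x y, ∀ t ∈ I,
      derivWithin (fun s => β s t) (Icc a b) σ = Df (σ, t) (1, 0) := fun σ hσ t ht =>
    derivWithin_eq_fderivWithin_uncurry hab (hβ.differentiableOn (by norm_num)) (hxy hσ) ht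
  have hacc : ∀ σ ∈ uIcc x y, ∀ t ∈ I,
      HasDerivAt (fun t => Df (σ, t) (1, 0)) (fderivWithin ℝ Df P (σ, t) (0, 1) (1, 0)) t :=
    fun σ hσ t ht => by
      simpa using (hasDerivAt_prodMk_right_of_differentiableOn hI
        (hDf.differentiableOn one_ne_zero) (hxy hσ) ht).clm_apply
        (hasDerivAt_const t ((1 : ℝ), (0 : ℝ)))
  have hmain := hasDerivAt_integral_norm_of_continuousOn (hI.mem_nhds ht₀)
    ((hDf.continuousOn.clm_apply continuousOn_const).mono hsub)
    ((((hDf.continuousOn_fderivWithin hP le_rfl).clm_apply continuousOn_const).clm_apply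
      continuousOn_const).mono hsub) hacc fun σ hσ => hvel σ hσ t₀ ht₀ ▸ hne σ hσ
  refine (hmain.congr_of_eventuallyEq ?_).congr_deriv
    (intervalIntegral.integral_congr fun σ hσ => ?_)
  · filter_upwards [hI.mem_nhds ht₀] with t ht
    exact intervalIntegral.integral_congr fun σ hσ => by simp only [hvel σ hσ t ht]
  · rw [hvel σ hσ t₀ ht₀, derivWithin_deriv_eq_fderivWithin_fderivWithin hab hI hβ (hxy hσ) ht₀]

theorem inner_derivWithin_smul_of_inner_eq_zero {T Q : ℝ → E} {μ : ℝ → ℝ} {S : Set ℝ} {σ : ℝ}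
    (hS : UniqueDiffWithinAt ℝ S σ) (hσ : σ ∈ S) (hT : DifferentiableWithinAt ℝ T S σ)
    (hQ : DifferentiableWithinAt ℝ Q S σ) (hμ : DifferentiableWithinAt ℝ μ S σ)
    (horth : ∀ s ∈ S, ⟪T s, Q s⟫ = 0) :
    ⟪T σ, derivWithin (fun s => μ s • Q s) S σ⟫ = -(μ σ * ⟪derivWithin T S σ, Q σ⟫) := by
  have hTQ : ⟪T σ, derivWithin Q S σ⟫ + ⟪derivWithin T S σ, Q σ⟫ = 0 :=
    hS.eq_deriv S (hT.hasDerivWithinAt.inner ℝ hQ.hasDerivWithinAt)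
      ((hasDerivWithinAt_const σ S 0).congr horth (horth σ hσ))
  rw [derivWithin_fun_smul hμ hQ, inner_add_right, real_inner_smul_right, real_inner_smul_right,
    horth σ hσ, eq_neg_of_add_eq_zero_left hTQ]
  ring

theorem hasDerivAt_integral_norm_of_normal_variation {α Q : ℝ → E} {μ : ℝ → ℝ}
    {β : ℝ → ℝ → E} {a b x y t₀ : ℝ} {I : Set ℝ} (hab : a < b) (hI : IsOpen I) (ht₀ : t₀ ∈ I)
    (hxy : uIcc x y ⊆ Icc a b) (hα : ContDiffOn ℝ 2 α (Icc a b))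
    (hunit : ∀ s ∈ Icc a b, ‖derivWithin α (Icc a b) s‖ = 1)
    (hQ : DifferentiableOn ℝ Q (Icc a b))
    (hQperp : ∀ s ∈ Icc a b, ⟪derivWithin α (Icc a b) s, Q s⟫ = 0)
    (hμ : DifferentiableOn ℝ μ (Icc a b))
    (hβ : ContDiffOn ℝ 2 (Function.uncurry β) (Icc a b ×ˢ I))
    (hβ0 : ∀ σ ∈ Icc a b, β σ t₀ = α σ)
    (hβt : ∀ σ ∈ Icc a b, deriv (fun t => β σ t) t₀ = μ σ • Q σ) :
    HasDerivAt (fun t => ∫ σ in x..y, ‖derivWithin (fun s => β s t) (Icc a b) σ‖)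
      (-∫ σ in x..y, μ σ * ⟪derivWithin (derivWithin α (Icc a b)) (Icc a b) σ, Q σ⟫) t₀ := by
  have hS : UniqueDiffOn ℝ (Icc a b) := uniqueDiffOn_Icc hab
  have hT : DifferentiableOn ℝ (derivWithin α (Icc a b)) (Icc a b) :=
    (hα.derivWithin hS (m := 1) (by norm_num)).differentiableOn one_ne_zero
  have hvel : ∀ σ ∈ Icc a b,
      derivWithin (fun s => β s t₀) (Icc a b) σ = derivWithin α (Icc a b) σ :=
    fun σ hσ => derivWithin_congr hβ0 (hβ0 σ hσ)
  refine (hasDerivAt_integral_norm_derivWithin hab hI ht₀ hβ hxy fun σ hσ => ?_).congr_deriv ?_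
  · rw [hvel σ (hxy hσ), ← norm_ne_zero_iff, hunit σ (hxy hσ)]
    exact one_ne_zero
  rw [← intervalIntegral.integral_neg]
  refine intervalIntegral.integral_congr fun σ hσ => ?_
  have hσ' := hxy hσ
  rw [hvel σ hσ', hunit σ hσ', div_one, derivWithin_congr hβt (hβt σ hσ'),
    inner_derivWithin_smul_of_inner_eq_zero (hS σ hσ') hσ' (hT σ hσ') (hQ σ hσ') (hμ σ hσ') hQperp]

end FirstVariation

theorem deriv_length_parameter_of_variation_general
    (l lstar ε : ℝ) (hl : 0 < l) (hll : l < lstar) (hε : 0 < ε)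
    (α Q : ℝ → EuclideanSpace ℝ (Fin 3)) (μ : ℝ → ℝ)
    (β : ℝ → ℝ → EuclideanSpace ℝ (Fin 3)) (lam : ℝ → ℝ)
    (hα : ContDiffOn ℝ 2 α (Set.Icc 0 lstar))
    (hunit : ∀ s ∈ Set.Icc (0:ℝ) lstar, ‖derivWithin α (Set.Icc 0 lstar) s‖ = 1)
    (hQ : ContDiffOn ℝ 1 Q (Set.Icc 0 lstar))
    (hQperp : ∀ s ∈ Set.Icc (0:ℝ) lstar, ⟪derivWithin α (Set.Icc 0 lstar) s, Q s⟫ = 0)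
    (hμ : ContDiffOn ℝ 1 μ (Set.Icc 0 lstar))
    (hβ : ContDiffOn ℝ 2 (fun p : ℝ × ℝ => β p.1 p.2)
      (Set.Icc 0 lstar ×ˢ Set.Ioo (-ε) ε))
    (hβ0 : ∀ σ ∈ Set.Icc (0:ℝ) lstar, β σ 0 = α σ)
    (hβt : ∀ σ ∈ Set.Icc (0:ℝ) lstar, deriv (fun t => β σ t) 0 = μ σ • Q σ)
    (hlammem : ∀ t ∈ Set.Ioo (-ε) ε, lam t ∈ Set.Ioc (0:ℝ) lstar)
    (hlamdiff : DifferentiableOn ℝ lam (Set.Ioo (-ε) ε))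
    (hlam0 : lam 0 = l)
    (hlen : ∀ t ∈ Set.Ioo (-ε) ε,
      ∫ σ in (0:ℝ)..(lam t), ‖derivWithin (fun s => β s t) (Set.Icc 0 lstar) σ‖ = l) :
    deriv lam 0 = ∫ s in (0:ℝ)..l,
      μ s * ⟪derivWithin (derivWithin α (Set.Icc 0 lstar)) (Set.Icc 0 lstar) s, Q s⟫ := by
  set S := Icc (0 : ℝ) lstar
  have hI : Ioo (-ε) ε ∈ 𝓝 (0 : ℝ) := Ioo_mem_nhds (neg_lt_zero.2 hε) hε
  have hlS : l ∈ S := ⟨hl.le, hll.le⟩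
  have h0S : (0 : ℝ) ∈ S := ⟨le_rfl, (hl.trans hll).le⟩
  set g : ℝ × ℝ → ℝ := fun p => ‖derivWithin (fun s => β s p.2) S p.1‖
  have hg : ContinuousOn g (S ×ˢ Ioo (-ε) ε) :=
    (continuousOn_derivWithin_uncurry (hl.trans hll) isOpen_Ioo (hβ.of_le (by norm_num))).norm
  have hint : ∀ t ∈ Ioo (-ε) ε, ∀ x ∈ S, ∀ y ∈ S,
      IntervalIntegrable (fun σ => g (σ, t)) volume x y := fun t ht x hx y hy =>
    ((hg.comp (continuousOn_id.prodMk continuousOn_const) fun σ hσ => ⟨hσ, ht⟩).mono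
      (uIcc_subset_Icc hx hy)).intervalIntegrable
  have hlamS : ∀ t ∈ Ioo (-ε) ε, lam t ∈ S := fun t ht => Ioc_subset_Icc_self (hlammem t ht)
  have hΦ := hasDerivAt_integral_norm_of_normal_variation (hl.trans hll) isOpen_Ioo
    (mem_of_mem_nhds hI) (uIcc_subset_Icc h0S hlS) hα hunit (hQ.differentiableOn one_ne_zero)
    hQperp (hμ.differentiableOn one_ne_zero) hβ hβ0 hβt
  have key := smul_eq_neg_of_intervalIntegral_eq_const (g := g) (a := 0)
    (hlamdiff.differentiableAt hI).hasDerivAt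
    (hlam0 ▸ hg.continuousAt (prod_mem_nhds (Icc_mem_nhds hl hll) hI))
    (eventually_of_mem hI fun t ht =>
      ⟨hint t ht _ h0S _ (hlam0 ▸ hlS), hint t ht _ (hlam0 ▸ hlS) _ (hlamS t ht)⟩)
    (hlam0 ▸ hΦ) (eventually_of_mem hI hlen)
  simpa [g, hlam0, derivWithin_congr hβ0 (hβ0 l hlS), hunit l hlS] using key

/-- If `λ(t)` is the reparametrization bound keeping the length of the
varied arcs `σ ↦ β(σ, t)`, `0 ≤ σ ≤ λ(t)`, equal to `l`, then
`dλ/dt|₀ = ∫₀ˡ μ·κ_g ds`, where `κ_g = ⟨α″, Q⟩`. -/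
theorem deriv_length_parameter_of_variation
    (l lstar ε : ℝ) (hl : 0 < l) (hll : l < lstar) (hε : 0 < ε)
    (α Q : ℝ → EuclideanSpace ℝ (Fin 3)) (μ : ℝ → ℝ)
    (β : ℝ → ℝ → EuclideanSpace ℝ (Fin 3)) (lam : ℝ → ℝ)
    (hα : ContDiffOn ℝ 2 α (Set.Icc 0 lstar))
    (hunit : ∀ s ∈ Set.Icc (0:ℝ) lstar, ‖derivWithin α (Set.Icc 0 lstar) s‖ = 1)
    (hQ : ContDiffOn ℝ 1 Q (Set.Icc 0 lstar))
    (hQunit : ∀ s ∈ Set.Icc (0:ℝ) lstar, ‖Q s‖ = 1)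
    (hQperp : ∀ s ∈ Set.Icc (0:ℝ) lstar, ⟪derivWithin α (Set.Icc 0 lstar) s, Q s⟫ = 0)
    (hμ : ContDiffOn ℝ 1 μ (Set.Icc 0 lstar))
    (hβ : ContDiffOn ℝ 2 (fun p : ℝ × ℝ => β p.1 p.2)
      (Set.Icc 0 lstar ×ˢ Set.Ioo (-ε) ε))
    (hβ0 : ∀ σ ∈ Set.Icc (0:ℝ) lstar, β σ 0 = α σ)
    (hβt : ∀ σ ∈ Set.Icc (0:ℝ) lstar, deriv (fun t => β σ t) 0 = μ σ • Q σ)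
    (hlammem : ∀ t ∈ Set.Ioo (-ε) ε, lam t ∈ Set.Ioc (0:ℝ) lstar)
    (hlamdiff : DifferentiableOn ℝ lam (Set.Ioo (-ε) ε))
    (hlam0 : lam 0 = l)
    (hlen : ∀ t ∈ Set.Ioo (-ε) ε,
      ∫ σ in (0:ℝ)..(lam t), ‖derivWithin (fun s => β s t) (Set.Icc 0 lstar) σ‖ = l) :
    deriv lam 0 = ∫ s in (0:ℝ)..l,
      μ s * ⟪derivWithin (derivWithin α (Set.Icc 0 lstar)) (Set.Icc 0 lstar) s, Q s⟫ :=
  deriv_length_parameter_of_variation_general l lstar ε hl hll hε α Q μ β lam hα hunit hQ hQperp hμ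
    hβ hβ0 hβt hlammem hlamdiff hlam0 hlen
end

section
/- Let l > 0, let E : [0,l] → ℝ be continuous, and let A, B, C ∈ ℝ. Suppose that for every C^∞ function μ : [0,l] → ℝ with μ(0) = μ′(0) = μ″(0) = 0 one has ∫₀^l μ(s)·E(s) ds + A·μ(l) + B·μ′(l) + C·μ″(l) = 0. Then E(s) = 0 for all s ∈ [0,l] and A = B = C = 0. -/
open Polynomial MeasureTheory Set Filter intervalIntegral

private lemma aux_dvd (a : ℝ) (k : ℕ) {q : ℝ[X]} (hq : (X - C a) ^ (k + 1) ∣ q) :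
    (X - C a) ^ k ∣ derivative q := by
  obtain ⟨r, rfl⟩ := hq
  rw [derivative_mul, derivative_pow_succ]
  refine dvd_add ⟨C ((k : ℝ) + 1) * derivative (X - C a) * r, by ring⟩
    ⟨(X - C a) * derivative r, by ring⟩

private lemma aux_eval (a : ℝ) (k : ℕ) {q : ℝ[X]} (hq : (X - C a) ^ (k + 1) ∣ q) :
    eval a q = 0 := by
  obtain ⟨r, rfl⟩ := hq
  simp

/-- Fundamental lemma of the calculus of variations with a free end:
if `∫₀ˡ μ·E + A·μ(l) + B·μ′(l) + C·μ″(l) = 0` for every smooth `μ` with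
`μ(0) = μ′(0) = μ″(0) = 0`, then `E ≡ 0` on `[0, l]` and `A = B = C = 0`. -/
theorem fundamental_lemma_free_end
    (l : ℝ) (hl : 0 < l) (E : ℝ → ℝ) (A B C : ℝ)
    (hE : ContinuousOn E (Set.Icc 0 l))
    (h : ∀ μ : ℝ → ℝ, ContDiff ℝ (⊤ : ℕ∞) μ → μ 0 = 0 → deriv μ 0 = 0 →
      deriv (deriv μ) 0 = 0 →
      (∫ s in (0:ℝ)..l, μ s * E s) + A * μ l + B * deriv μ l
        + C * deriv (deriv μ) l = 0) :
    (∀ s ∈ Set.Icc (0:ℝ) l, E s = 0) ∧ A = 0 ∧ B = 0 ∧ C = 0 := by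
  have hln : l ≠ 0 := ne_of_gt hl
  have huIcc : uIcc (0:ℝ) l = Icc 0 l := uIcc_of_le hl.le
  -- general polynomial test functions
  have hq_main : ∀ q : ℝ[X], eval 0 q = 0 → eval 0 (derivative q) = 0 →
      eval 0 (derivative (derivative q)) = 0 →
      (∫ s in (0:ℝ)..l, eval s q * E s) + A * eval l q + B * eval l (derivative q)
        + C * eval l (derivative (derivative q)) = 0 := by
    intro q h1 h2 h3
    have hcd : ContDiff ℝ (⊤ : ℕ∞) (fun s : ℝ => eval s q) :=
      (AnalyticOn.eval_polynomial (𝕜 := ℝ) q).contDiff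
    have hd1 : deriv (fun s : ℝ => eval s q) = fun s => eval s (derivative q) :=
      funext fun x => q.deriv
    have hd2 : deriv (deriv (fun s : ℝ => eval s q))
        = fun s => eval s (derivative (derivative q)) := by
      rw [hd1]; exact funext fun x => (derivative q).deriv
    have := h (fun s => eval s q) hcd h1 (by rw [hd1]; exact h2) (by rw [hd2]; exact h3)
    rw [hd2, hd1] at this
    simpa using this
  -- Part 1: E vanishes on [0, l]
  have hEIcc : ∀ s ∈ Icc (0:ℝ) l, E s = 0 := by
    set F : ℝ → ℝ := fun s => s ^ 3 * (s - l) ^ 3 * E s with hFdef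
    have hFc : ContinuousOn F (Icc 0 l) :=
      ((continuous_pow 3).continuousOn.mul
        (((continuous_id.sub continuous_const).pow 3).continuousOn)).mul hE
    have key : ∀ p : ℝ[X], (∫ s in (0:ℝ)..l, F s * eval s p) = 0 := by
      intro p
      set q : ℝ[X] := X ^ 3 * (X - Polynomial.C l) ^ 3 * p with hqdef
      have h0 : (X - Polynomial.C (0:ℝ)) ^ (2 + 1) ∣ q :=
        ⟨(X - Polynomial.C l) ^ 3 * p, by rw [map_zero, sub_zero]; ring⟩
      have hl3 : (X - Polynomial.C l) ^ (2 + 1) ∣ q := ⟨X ^ 3 * p, by ring⟩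
      have hmain := hq_main q (aux_eval _ 2 h0) (aux_eval _ 1 (aux_dvd _ 2 h0))
        (aux_eval _ 0 (aux_dvd _ 1 (aux_dvd _ 2 h0)))
      rw [aux_eval _ 2 hl3, aux_eval _ 1 (aux_dvd _ 2 hl3),
        aux_eval _ 0 (aux_dvd _ 1 (aux_dvd _ 2 hl3))] at hmain
      simp only [mul_zero, add_zero] at hmain
      refine Eq.trans ?_ hmain
      apply integral_congr
      intro x hx
      simp only [hFdef, hqdef, eval_mul, eval_pow, eval_sub, eval_X, eval_C]
      ring
    obtain ⟨M, hM⟩ := isCompact_Icc.exists_bound_of_continuousOn hFc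
    have hM0 : 0 ≤ M := le_trans (norm_nonneg _) (hM 0 ⟨le_refl 0, hl.le⟩)
    have hFc' : ContinuousOn F (uIcc 0 l) := huIcc ▸ hFc
    have hInt : IntervalIntegrable (fun s => F s * F s) volume 0 l :=
      (hFc'.mul hFc').intervalIntegrable
    have hsmall : ∀ ε > 0, |∫ s in (0:ℝ)..l, F s * F s| ≤ M * l * ε := by
      intro ε hε
      obtain ⟨p, hp⟩ := exists_polynomial_near_of_continuousOn 0 l F hFc ε hε
      have hFp : IntervalIntegrable (fun s => F s * eval s p) volume 0 l :=
        (hFc'.mul (p.continuous_aeval.continuousOn)).intervalIntegrable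
      have hsplit : (∫ s in (0:ℝ)..l, F s * F s)
          = ∫ s in (0:ℝ)..l, F s * (F s - eval s p) := by
        simp only [mul_sub]
        rw [integral_sub hInt hFp, key p, sub_zero]
      rw [hsplit]
      have hb := intervalIntegral.norm_integral_le_of_norm_le_const
        (a := 0) (b := l) (C := M * ε) (f := fun s => F s * (F s - eval s p)) ?_
      · rw [sub_zero, abs_of_nonneg hl.le] at hb
        calc |∫ s in (0:ℝ)..l, F s * (F s - eval s p)| ≤ M * ε * l := hb
          _ = M * l * ε := by ring
      · intro x hx
        rw [uIoc_of_le hl.le] at hx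
        have hx' : x ∈ Icc (0:ℝ) l := Ioc_subset_Icc_self hx
        rw [Real.norm_eq_abs, abs_mul]
        refine mul_le_mul (hM x hx') ?_ (abs_nonneg _) hM0
        rw [abs_sub_comm]
        exact le_of_lt (hp x hx')
    have hI0 : (∫ s in (0:ℝ)..l, F s * F s) = 0 := by
      by_contra hne
      have hpos : 0 < |∫ s in (0:ℝ)..l, F s * F s| := abs_pos.mpr hne
      have h1 := hsmall (|∫ s in (0:ℝ)..l, F s * F s| / (M * l + 1)) (by positivity)
      have hlt : M * l * (|∫ s in (0:ℝ)..l, F s * F s| / (M * l + 1))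
          < |∫ s in (0:ℝ)..l, F s * F s| := by
        rw [← mul_div_assoc, div_lt_iff₀ (by positivity)]
        nlinarith [mul_nonneg hM0 hl.le]
      linarith
    have hae : (fun s => F s * F s) =ᵐ[volume.restrict (Ioc (0:ℝ) l)] 0 :=
      (integral_eq_zero_iff_of_le_of_nonneg_ae hl.le
        (ae_of_all _ fun x => mul_self_nonneg _) hInt).mp hI0
    have haeIoo : (fun s => F s * F s) =ᵐ[volume.restrict (Ioo (0:ℝ) l)] 0 :=
      ae_restrict_of_ae_restrict_of_subset Ioo_subset_Ioc_self hae
    have hFIoo : ∀ s ∈ Ioo (0:ℝ) l, F s = 0 := by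
      have := Measure.eqOn_Ioo_of_ae_eq _ haeIoo
        ((hFc.mul hFc).mono Ioo_subset_Icc_self) continuousOn_const
      intro s hs
      have := this hs
      simpa [mul_self_eq_zero] using this
    have hEIoo : ∀ s ∈ Ioo (0:ℝ) l, E s = 0 := by
      intro s hs
      have hne : s ^ 3 * (s - l) ^ 3 ≠ 0 :=
        mul_ne_zero (pow_ne_zero _ (ne_of_gt hs.1))
          (pow_ne_zero _ (sub_ne_zero.mpr (ne_of_lt hs.2)))
      have hF := hFIoo s hs
      rw [hFdef] at hF
      exact (mul_eq_zero.mp hF).resolve_left hne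
    intro s hs
    have hsc : s ∈ closure (Ioo 0 l) := by
      rw [closure_Ioo hln.symm]; exact hs
    have hnb : (nhdsWithin s (Ioo (0:ℝ) l)).NeBot :=
      mem_closure_iff_nhdsWithin_neBot.mp hsc
    have h1 : Tendsto E (nhdsWithin s (Ioo (0:ℝ) l)) (nhds (E s)) :=
      (hE s hs).mono Ioo_subset_Icc_self
    have h2 : Tendsto E (nhdsWithin s (Ioo (0:ℝ) l)) (nhds 0) :=
      tendsto_const_nhds.congr'
        ((eventually_mem_nhdsWithin).mono fun x hx => (hEIoo x hx).symm)
    exact tendsto_nhds_unique h1 h2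
  refine ⟨hEIcc, ?_⟩
  have hIz : ∀ q : ℝ[X], (∫ s in (0:ℝ)..l, eval s q * E s) = 0 := by
    intro q
    have hcg : EqOn (fun s => eval s q * E s) (fun _ => (0:ℝ)) (uIcc 0 l) := by
      intro x hx
      rw [huIcc] at hx
      simp [hEIcc x hx]
    rw [integral_congr hcg]
    simp
  have e3 := hq_main (X ^ 3) (by simp) (by simp [derivative_X_pow])
    (by simp [derivative_X_pow])
  have e4 := hq_main (X ^ 4) (by simp) (by simp [derivative_X_pow])
    (by simp [derivative_X_pow])
  have e5 := hq_main (X ^ 5) (by simp) (by simp [derivative_X_pow])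
    (by simp [derivative_X_pow])
  rw [hIz] at e3 e4 e5
  simp [derivative_X_pow] at e3 e4 e5
  have d1 : A * l ^ 2 + 3 * (B * l) + 6 * C = 0 := by
    apply mul_left_cancel₀ hln
    linear_combination e3
  have d2 : A * l ^ 2 + 4 * (B * l) + 12 * C = 0 := by
    apply mul_left_cancel₀ (pow_ne_zero 2 hln)
    linear_combination e4
  have d3 : A * l ^ 2 + 5 * (B * l) + 20 * C = 0 := by
    apply mul_left_cancel₀ (pow_ne_zero 3 hln)
    linear_combination e5
  have hC : C = 0 := by linarith
  have hBl : B * l = 0 := by linarith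
  have hAl : A * l ^ 2 = 0 := by linarith
  exact ⟨(mul_eq_zero.mp hAl).resolve_right (pow_ne_zero 2 hln),
    (mul_eq_zero.mp hBl).resolve_right hln, hC⟩
end

section
/- Let κ_g, κ_n, τ_g : [0,l] → ℝ be smooth (C^∞) functions with κ² := κ_g² + κ_n² nowhere zero on [0,l], and set τ := τ_g + (κ_g·κ_n′ − κ_g′·κ_n)/κ². Suppose κ_n(s) = 0 for all s ∈ [0,l] (the asymptotic curve case), so that κ_g is nowhere zero and τ = τ_g. If the functions satisfy the differential equation (τ_g/κ_g²)·(2κ_g³·τ_g − κ_g′·τ_g′ + κ_g·τ_g″) − ((τ_g/κ_g²)·(3κ_g·τ_g′ − 2τ_g·κ_g′))′ + 2·(τ_g²/κ_g)″ = 0 on [0,l] together with the boundary condition τ_g(l) = 0, then (DE), (BC1), (BC2), and (BC3) of the intrinsic system for a relaxed elastic line of second kind all hold. -/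
noncomputable section

/-- Derivative of a real function within the interval `[0, l]` (arc-length derivative
for functions defined on `[0, l]`). -/
def icD (l : ℝ) (f : ℝ → ℝ) : ℝ → ℝ := derivWithin f (Set.Icc 0 l)

/-- The square curvature `κ² = κ_g² + κ_n²`. -/
def kappaSq (kg kn : ℝ → ℝ) : ℝ → ℝ := fun s => kg s ^ 2 + kn s ^ 2

/-- The torsion expressed via the Darboux invariants:
`τ = τ_g + (κ_g·κ_n′ − κ_g′·κ_n)/(κ_g² + κ_n²)`. -/
def tauOf (l : ℝ) (kg kn tg : ℝ → ℝ) : ℝ → ℝ :=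
  fun s => tg s + (kg s * icD l kn s - icD l kg s * kn s) / (kg s ^ 2 + kn s ^ 2)

/-- (DE): the differential equation of the intrinsic system for a relaxed elastic
line of second kind, required to hold at every `s ∈ [0, l]`. -/
def RelaxedDE (l : ℝ) (kg kn tg τ : ℝ → ℝ) : Prop :=
  ∀ s ∈ Set.Icc (0:ℝ) l,
    kg s * τ l ^ 2
      + 2 * (τ s / kappaSq kg kn s) *
        (kg s * kappaSq kg kn s * (tg s + τ s)
          + 2 * kg s * kn s * icD l kg s
          - 2 * kg s * kn s ^ 2 * tg s
          - icD l kg s * icD l tg s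
          + 4 * kn s * tg s * icD l tg s
          - 2 * kg s ^ 2 * icD l kn s
          - 2 * kg s ^ 3 * tg s
          - tg s ^ 2 * icD l kn s
          - 2 * kg s * tg s ^ 3
          - kg s * icD l (icD l tg) s
          - 2 * kn s * icD l tg s * τ s
          + 2 * kg s * τ s * (kg s ^ 2 + kn s ^ 2 + tg s ^ 2))
      - 2 * icD l (fun u => (τ u / kappaSq kg kn u) *
          (-(kn u * kappaSq kg kn u) + 5 * kn u * tg u ^ 2 - 2 * tg u * icD l kg u
            + 3 * kg u * icD l tg u - 4 * kn u * tg u * τ u)) s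
      + 2 * icD l (icD l (fun u => (τ u / kappaSq kg kn u) *
          (icD l kn u + kn u * tg u + 3 * kg u * tg u - kg u * τ u))) s
      + 2 * icD l (icD l (icD l (fun u => kn u * τ u / kappaSq kg kn u))) s
      = 0

/-- (BC1): the first boundary condition at the free end `s = l`. -/
def RelaxedBC1 (l : ℝ) (kg kn tg τ : ℝ → ℝ) : Prop :=
  (τ l / kappaSq kg kn l) *
      (-(kn l * kappaSq kg kn l) - 2 * tg l * icD l kg l + 5 * kn l * tg l ^ 2
        + 3 * kg l * icD l tg l - 4 * kn l * tg l * τ l)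
    - icD l (fun u => (τ u / kappaSq kg kn u) *
        (icD l kn u + 3 * kg u * tg u + kn u * tg u - kg u * τ u)) l
    - icD l (icD l (fun u => kn u * τ u / kappaSq kg kn u)) l = 0

/-- (BC2): the second boundary condition at the free end `s = l`. -/
def RelaxedBC2 (l : ℝ) (kg kn tg τ : ℝ → ℝ) : Prop :=
  (τ l / kappaSq kg kn l) *
      (icD l kn l + 3 * kg l * tg l + kn l * tg l - kg l * τ l)
    + icD l (fun u => kn u * τ u / kappaSq kg kn u) l = 0

/-- (BC3): the third boundary condition `κ_n(l)·τ(l) = 0`. -/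
def RelaxedBC3 (l : ℝ) (kn τ : ℝ → ℝ) : Prop := kn l * τ l = 0

open Set Real in
private lemma key_identity (l : ℝ) (hl : 0 < l) (kg tg : ℝ → ℝ)
    (hkg : ContDiffOn ℝ (⊤ : ℕ∞) kg (Set.Icc 0 l))
    (htg : ContDiffOn ℝ (⊤ : ℕ∞) tg (Set.Icc 0 l))
    (hkg0 : ∀ s ∈ Set.Icc (0:ℝ) l, kg s ≠ 0)
    (hDE : ∀ s ∈ Set.Icc (0:ℝ) l,
      (tg s / kg s ^ 2) * (2 * kg s ^ 3 * tg s - icD l kg s * icD l tg s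
          + kg s * icD l (icD l tg) s)
        - icD l (fun u => (tg u / kg u ^ 2) *
            (3 * kg u * icD l tg u - 2 * tg u * icD l kg u)) s
        + 2 * icD l (icD l (fun u => tg u ^ 2 / kg u)) s = 0) :
    ∀ s ∈ Set.Icc (0:ℝ) l,
      2 * kg s ^ 3 * tg s ^ 2 + kg s * (icD l tg s) ^ 2
        + 2 * kg s * tg s * icD l (icD l tg) s
        - 2 * icD l kg s * tg s * icD l tg s = 0 := by
  intro s hs
  have hI : UniqueDiffOn ℝ (Set.Icc (0:ℝ) l) := uniqueDiffOn_Icc hl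
  have hkgd : DifferentiableOn ℝ kg (Set.Icc 0 l) := hkg.differentiableOn (by simp)
  have htgd : DifferentiableOn ℝ tg (Set.Icc 0 l) := htg.differentiableOn (by simp)
  have hk1 : ContDiffOn ℝ (⊤ : ℕ∞) (icD l kg) (Set.Icc 0 l) := hkg.derivWithin hI (by simp)
  have ht1 : ContDiffOn ℝ (⊤ : ℕ∞) (icD l tg) (Set.Icc 0 l) := htg.derivWithin hI (by simp)
  have hk1d : DifferentiableOn ℝ (icD l kg) (Set.Icc 0 l) := hk1.differentiableOn (by simp)
  have ht1d : DifferentiableOn ℝ (icD l tg) (Set.Icc 0 l) := ht1.differentiableOn (by simp)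
  have Hkg : ∀ u ∈ Set.Icc (0:ℝ) l, HasDerivWithinAt kg (icD l kg u) (Set.Icc 0 l) u :=
    fun u hu => (hkgd u hu).hasDerivWithinAt
  have Htg : ∀ u ∈ Set.Icc (0:ℝ) l, HasDerivWithinAt tg (icD l tg u) (Set.Icc 0 l) u :=
    fun u hu => (htgd u hu).hasDerivWithinAt
  have Hk1 : ∀ u ∈ Set.Icc (0:ℝ) l,
      HasDerivWithinAt (icD l kg) (icD l (icD l kg) u) (Set.Icc 0 l) u :=
    fun u hu => (hk1d u hu).hasDerivWithinAt
  have Ht1 : ∀ u ∈ Set.Icc (0:ℝ) l,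
      HasDerivWithinAt (icD l tg) (icD l (icD l tg) u) (Set.Icc 0 l) u :=
    fun u hu => (ht1d u hu).hasDerivWithinAt
  -- first derivative of h = tg^2/kg, valid at every point of the interval
  have hstep1 : ∀ u ∈ Set.Icc (0:ℝ) l,
      icD l (fun w => tg w ^ 2 / kg w) u
        = (2 * tg u * icD l tg u * kg u - tg u ^ 2 * icD l kg u) / kg u ^ 2 := by
    intro u hu
    have H : HasDerivWithinAt (fun w => tg w ^ 2 / kg w)
        ((2 * tg u * icD l tg u * kg u - tg u ^ 2 * icD l kg u) / kg u ^ 2)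
        (Set.Icc 0 l) u :=
      (((Htg u hu).pow 2).div (Hkg u hu) (hkg0 u hu)).congr_deriv (by push_cast; simp only [Pi.pow_apply]; ring)
    exact H.derivWithin (hI u hu)
  -- second derivative of h at s
  have hstep2 : icD l (icD l (fun w => tg w ^ 2 / kg w)) s
      = ((2 * icD l tg s ^ 2 * kg s + 2 * tg s * icD l (icD l tg) s * kg s
            + 2 * tg s * icD l tg s * icD l kg s
            - (2 * tg s * icD l tg s * icD l kg s + tg s ^ 2 * icD l (icD l kg) s)) * kg s ^ 2
          - (2 * tg s * icD l tg s * kg s - tg s ^ 2 * icD l kg s)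
            * (2 * kg s * icD l kg s)) / kg s ^ 4 := by
    have hcongr : icD l (icD l (fun w => tg w ^ 2 / kg w)) s
        = derivWithin (fun u => (2 * tg u * icD l tg u * kg u - tg u ^ 2 * icD l kg u)
            / kg u ^ 2) (Set.Icc 0 l) s :=
      derivWithin_congr (fun u hu => hstep1 u hu) (hstep1 s hs)
    rw [hcongr]
    have HN : HasDerivWithinAt
        (fun u => 2 * tg u * icD l tg u * kg u - tg u ^ 2 * icD l kg u)
        (((2 * icD l tg s) * icD l tg s + (2 * tg s) * icD l (icD l tg) s) * kg s
            + (2 * tg s * icD l tg s) * icD l kg s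
          - (((2:ℕ) * tg s ^ 1 * icD l tg s) * icD l kg s + tg s ^ 2 * icD l (icD l kg) s))
        (Set.Icc 0 l) s :=
      (((((Htg s hs).const_mul 2).mul (Ht1 s hs)).mul (Hkg s hs)).sub
        (((Htg s hs).pow 2).mul (Hk1 s hs)))
    refine ((HN.div ((Hkg s hs).pow 2) (pow_ne_zero 2 (hkg0 s hs))).congr_deriv
      ?_).derivWithin (hI s hs)
    push_cast; simp only [Pi.pow_apply]; ring
  -- derivative of g1 at s
  have hd1 : icD l (fun u => (tg u / kg u ^ 2) *
        (3 * kg u * icD l tg u - 2 * tg u * icD l kg u)) s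
      = ((icD l tg s * kg s ^ 2 - tg s * (2 * kg s * icD l kg s)) / kg s ^ 4)
          * (3 * kg s * icD l tg s - 2 * tg s * icD l kg s)
        + (tg s / kg s ^ 2) * (3 * icD l kg s * icD l tg s + 3 * kg s * icD l (icD l tg) s
            - (2 * icD l tg s * icD l kg s + 2 * tg s * icD l (icD l kg) s)) := by
    have H : HasDerivWithinAt (fun u => (tg u / kg u ^ 2) *
        (3 * kg u * icD l tg u - 2 * tg u * icD l kg u))
        (((icD l tg s * kg s ^ 2 - tg s * (2 * kg s * icD l kg s)) / kg s ^ 4)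
          * (3 * kg s * icD l tg s - 2 * tg s * icD l kg s)
        + (tg s / kg s ^ 2) * (3 * icD l kg s * icD l tg s + 3 * kg s * icD l (icD l tg) s
            - (2 * icD l tg s * icD l kg s + 2 * tg s * icD l (icD l kg) s)))
        (Set.Icc 0 l) s :=
      (((Htg s hs).div ((Hkg s hs).pow 2) (pow_ne_zero 2 (hkg0 s hs))).mul
        ((((Hkg s hs).const_mul 3).mul (Ht1 s hs)).sub
          (((Htg s hs).const_mul 2).mul (Hk1 s hs)))).congr_deriv (by push_cast; simp only [Pi.pow_apply, Pi.div_apply, Pi.mul_apply, Pi.sub_apply]; ring)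
    exact H.derivWithin (hI s hs)
  have hA := hDE s hs
  rw [hd1, hstep2] at hA
  have hk := hkg0 s hs
  field_simp at hA
  have h10 : kg s ^ 10 * (2 * kg s ^ 3 * tg s ^ 2 + kg s * (icD l tg s) ^ 2
      + 2 * kg s * tg s * icD l (icD l tg) s
      - 2 * icD l kg s * tg s * icD l tg s) = 0 := by linear_combination kg s ^ 9 * hA
  exact (mul_eq_zero.mp h10).resolve_left (pow_ne_zero 10 hk)

open Set Real in
private lemma quad_ineq (M a b P Q R : ℝ) (ha : |a| ≤ M) (hb : |b| ≤ M) :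
    0 ≤ 2*P*(2*a*P - 2*b*Q) + 2*Q*(3/2*P + a*Q - b*R) + 2*R*(3*Q)
        + (8*M+8)*(P^2+Q^2+R^2) := by
  obtain ⟨ha1, ha2⟩ := abs_le.mp ha
  obtain ⟨hb1, hb2⟩ := abs_le.mp hb
  have hM : 0 ≤ M := (abs_nonneg a).trans ha
  nlinarith [mul_nonneg (by linarith : (0:ℝ) ≤ M + a) (sq_nonneg P),
    mul_nonneg (by linarith : (0:ℝ) ≤ M + a) (sq_nonneg Q),
    mul_nonneg (by linarith : (0:ℝ) ≤ M - b) (sq_nonneg (P + Q)),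
    mul_nonneg (by linarith : (0:ℝ) ≤ M + b) (sq_nonneg (P - Q)),
    mul_nonneg (by linarith : (0:ℝ) ≤ M - b) (sq_nonneg (Q + R)),
    mul_nonneg (by linarith : (0:ℝ) ≤ M + b) (sq_nonneg (Q - R)),
    sq_nonneg (P + Q), sq_nonneg (P - Q), sq_nonneg (Q + R), sq_nonneg (Q - R),
    mul_nonneg hM (sq_nonneg P), mul_nonneg hM (sq_nonneg Q), mul_nonneg hM (sq_nonneg R)]

open Set Real in
private lemma tg_zero (l : ℝ) (hl : 0 < l) (kg tg : ℝ → ℝ)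
    (hkg : ContDiffOn ℝ (⊤ : ℕ∞) kg (Set.Icc 0 l))
    (htg : ContDiffOn ℝ (⊤ : ℕ∞) tg (Set.Icc 0 l))
    (hkg0 : ∀ s ∈ Set.Icc (0:ℝ) l, kg s ≠ 0)
    (hE : ∀ s ∈ Set.Icc (0:ℝ) l,
      2 * kg s ^ 3 * tg s ^ 2 + kg s * (icD l tg s) ^ 2
        + 2 * kg s * tg s * icD l (icD l tg) s
        - 2 * icD l kg s * tg s * icD l tg s = 0)
    (hbc : tg l = 0) :
    ∀ s ∈ Set.Icc (0:ℝ) l, tg s = 0 := by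
  have hI : UniqueDiffOn ℝ (Set.Icc (0:ℝ) l) := uniqueDiffOn_Icc hl
  have htgd : DifferentiableOn ℝ tg (Set.Icc 0 l) := htg.differentiableOn (by simp)
  have hk1 : ContDiffOn ℝ (⊤ : ℕ∞) (icD l kg) (Set.Icc 0 l) := hkg.derivWithin hI (by simp)
  have ht1 : ContDiffOn ℝ (⊤ : ℕ∞) (icD l tg) (Set.Icc 0 l) := htg.derivWithin hI (by simp)
  have ht1d : DifferentiableOn ℝ (icD l tg) (Set.Icc 0 l) := ht1.differentiableOn (by simp)
  have Htg : ∀ u ∈ Set.Icc (0:ℝ) l, HasDerivWithinAt tg (icD l tg u) (Set.Icc 0 l) u :=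
    fun u hu => (htgd u hu).hasDerivWithinAt
  have Ht1 : ∀ u ∈ Set.Icc (0:ℝ) l,
      HasDerivWithinAt (icD l tg) (icD l (icD l tg) u) (Set.Icc 0 l) u :=
    fun u hu => (ht1d u hu).hasDerivWithinAt
  -- bounds on the coefficients
  obtain ⟨M1, hM1⟩ := isCompact_Icc.exists_bound_of_continuousOn
    ((hk1.continuousOn.div hkg.continuousOn hkg0) :
      ContinuousOn (fun u => icD l kg u / kg u) (Set.Icc 0 l))
  obtain ⟨M2, hM2⟩ := isCompact_Icc.exists_bound_of_continuousOn
    ((hkg.continuousOn.pow 2) : ContinuousOn (fun u => kg u ^ 2) (Set.Icc 0 l))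
  set M := max M1 M2 with hM
  set C := 8 * M + 8 with hC
  -- the combined function W and its derivative
  set W : ℝ → ℝ := fun u => (tg u * icD l tg u ^ 2) ^ 2 + (tg u ^ 2 * icD l tg u) ^ 2
      + (tg u ^ 3) ^ 2 with hWdef
  have HW : ∀ u ∈ Set.Icc (0:ℝ) l, HasDerivWithinAt W
      (2 * (tg u * icD l tg u ^ 2) * (icD l tg u ^ 3 + 2 * tg u * icD l tg u * icD l (icD l tg) u)
        + 2 * (tg u ^ 2 * icD l tg u) * (2 * tg u * icD l tg u ^ 2 + tg u ^ 2 * icD l (icD l tg) u)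
        + 2 * (tg u ^ 3) * (3 * tg u ^ 2 * icD l tg u)) (Set.Icc 0 l) u := by
    intro u hu
    have h1 : HasDerivWithinAt (fun w => tg w * icD l tg w ^ 2)
        (icD l tg u ^ 3 + 2 * tg u * icD l tg u * icD l (icD l tg) u) (Set.Icc 0 l) u :=
      ((Htg u hu).mul ((Ht1 u hu).pow 2)).congr_deriv (by push_cast; simp only [Pi.pow_apply]; ring)
    have h2 : HasDerivWithinAt (fun w => tg w ^ 2 * icD l tg w)
        (2 * tg u * icD l tg u ^ 2 + tg u ^ 2 * icD l (icD l tg) u) (Set.Icc 0 l) u :=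
      (((Htg u hu).pow 2).mul (Ht1 u hu)).congr_deriv (by push_cast; simp only [Pi.pow_apply]; ring)
    have h3 : HasDerivWithinAt (fun w => tg w ^ 3)
        (3 * tg u ^ 2 * icD l tg u) (Set.Icc 0 l) u :=
      ((Htg u hu).pow 3).congr_deriv (by push_cast; ring)
    refine ((((h1.pow 2).add (h2.pow 2)).add (h3.pow 2)).congr_deriv ?_)
    push_cast; ring
  -- the auxiliary monotone function
  set Z : ℝ → ℝ := fun u => W u * Real.exp (C * u) with hZdef
  have hWc : ContinuousOn W (Set.Icc 0 l) := by
    apply ContinuousOn.add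
    apply ContinuousOn.add
    · exact ((htg.continuousOn.mul (ht1.continuousOn.pow 2)).pow 2)
    · exact (((htg.continuousOn.pow 2).mul ht1.continuousOn).pow 2)
    · exact ((htg.continuousOn.pow 3).pow 2)
  have hZc : ContinuousOn Z (Set.Icc 0 l) :=
    hWc.mul (Real.continuous_exp.comp (continuous_const.mul continuous_id)).continuousOn
  have hZat : ∀ x ∈ Set.Ioo (0:ℝ) l, HasDerivAt Z
      ((2 * (tg x * icD l tg x ^ 2) * (icD l tg x ^ 3 + 2 * tg x * icD l tg x * icD l (icD l tg) x)
        + 2 * (tg x ^ 2 * icD l tg x) * (2 * tg x * icD l tg x ^ 2 + tg x ^ 2 * icD l (icD l tg) x)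
        + 2 * (tg x ^ 3) * (3 * tg x ^ 2 * icD l tg x)) * Real.exp (C * x)
        + W x * (Real.exp (C * x) * (C * 1))) x := by
    intro x hx
    have hmem : Set.Icc (0:ℝ) l ∈ nhds x := Icc_mem_nhds hx.1 hx.2
    have hWat : HasDerivAt W _ x := (HW x (Ioo_subset_Icc_self hx)).hasDerivAt hmem
    exact hWat.mul (((hasDerivAt_id x).const_mul C).exp)
  have hderiv_nonneg : ∀ x ∈ Set.Ioo (0:ℝ) l, 0 ≤ deriv Z x := by
    intro x hx
    have hx' : x ∈ Set.Icc (0:ℝ) l := Ioo_subset_Icc_self hx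
    rw [(hZat x hx).deriv]
    have hk := hkg0 x hx'
    have hEx := hE x hx'
    -- rewrite derivatives of P, Q using the differential identity
    have hp' : icD l tg x ^ 3 + 2 * tg x * icD l tg x * icD l (icD l tg) x
        = 2 * (icD l kg x / kg x) * (tg x * icD l tg x ^ 2)
          - 2 * (kg x ^ 2) * (tg x ^ 2 * icD l tg x) := by
      field_simp
      linear_combination icD l tg x * hEx
    have hq' : 2 * tg x * icD l tg x ^ 2 + tg x ^ 2 * icD l (icD l tg) x
        = 3/2 * (tg x * icD l tg x ^ 2) + (icD l kg x / kg x) * (tg x ^ 2 * icD l tg x)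
          - (kg x ^ 2) * (tg x ^ 3) := by
      field_simp
      linear_combination tg x * hEx
    have ha : |icD l kg x / kg x| ≤ M := by
      have h1 := hM1 x hx'
      rw [Pi.div_apply, Real.norm_eq_abs] at h1
      exact le_trans h1 (le_max_left _ _)
    have hb : |kg x ^ 2| ≤ M := by
      have h1 := hM2 x hx'
      rw [Real.norm_eq_abs] at h1
      exact le_trans h1 (le_max_right _ _)
    have hkey := quad_ineq M (icD l kg x / kg x) (kg x ^ 2)
      (tg x * icD l tg x ^ 2) (tg x ^ 2 * icD l tg x) (tg x ^ 3) ha hb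
    have hsum : 0 ≤ (2 * (tg x * icD l tg x ^ 2) * (icD l tg x ^ 3 + 2 * tg x * icD l tg x * icD l (icD l tg) x)
        + 2 * (tg x ^ 2 * icD l tg x) * (2 * tg x * icD l tg x ^ 2 + tg x ^ 2 * icD l (icD l tg) x)
        + 2 * (tg x ^ 3) * (3 * tg x ^ 2 * icD l tg x)) + C * W x := by
      rw [hp', hq']
      simp only [hWdef, hC]
      nlinarith [hkey]
    have hexp := Real.exp_pos (C * x)
    nlinarith [mul_nonneg hsum hexp.le]
  have hZdiff : DifferentiableOn ℝ Z (interior (Set.Icc (0:ℝ) l)) := by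
    rw [interior_Icc]
    exact fun x hx => ((hZat x hx).differentiableAt).differentiableWithinAt
  have hmono : MonotoneOn Z (Set.Icc (0:ℝ) l) := by
    refine monotoneOn_of_deriv_nonneg (convex_Icc 0 l) hZc hZdiff ?_
    rw [interior_Icc]; exact hderiv_nonneg
  have hWl : W l = 0 := by simp [hWdef, hbc]
  have hZl : Z l = 0 := by simp [hZdef, hWl]
  intro s hs
  have hle : Z s ≤ 0 := by
    have := hmono hs (⟨hl.le, le_refl l⟩ : l ∈ Set.Icc (0:ℝ) l) hs.2
    rwa [hZl] at this
  have hge : 0 ≤ Z s := by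
    simp only [hZdef, hWdef]
    positivity
  have hZs : Z s = 0 := le_antisymm hle hge
  have hexp := Real.exp_pos (C * s)
  simp only [hZdef] at hZs
  have hWs : (tg s * icD l tg s ^ 2) ^ 2 + (tg s ^ 2 * icD l tg s) ^ 2 + (tg s ^ 3) ^ 2 = 0 := by
    rcases mul_eq_zero.mp hZs with h | h
    · simpa [hWdef] using h
    · exact absurd h hexp.ne'
  have h1 : (tg s ^ 3) ^ 2 ≤ 0 := by
    nlinarith [sq_nonneg (tg s * icD l tg s ^ 2), sq_nonneg (tg s ^ 2 * icD l tg s)]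
  have h2 : tg s ^ 3 = 0 := by
    have h3 := le_antisymm h1 (sq_nonneg (tg s ^ 3))
    exact pow_eq_zero_iff two_ne_zero |>.mp h3
  exact pow_eq_zero_iff three_ne_zero |>.mp h2

/-- An asymptotic curve (κ_n ≡ 0) satisfying the stated differential
equation and the boundary condition `τ_g(l) = 0` is a relaxed elastic line of second
kind, i.e. it satisfies (DE), (BC1), (BC2), (BC3). -/
theorem asymptotic_curve_relaxed_elastic_line_of_second_kind
    (l : ℝ) (hl : 0 < l) (kg kn tg : ℝ → ℝ)
    (hkg : ContDiffOn ℝ (⊤ : ℕ∞) kg (Set.Icc 0 l))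
    (hkn : ContDiffOn ℝ (⊤ : ℕ∞) kn (Set.Icc 0 l))
    (htg : ContDiffOn ℝ (⊤ : ℕ∞) tg (Set.Icc 0 l))
    (hκ : ∀ s ∈ Set.Icc (0:ℝ) l, kappaSq kg kn s ≠ 0)
    (hasym : ∀ s ∈ Set.Icc (0:ℝ) l, kn s = 0)
    (hDE : ∀ s ∈ Set.Icc (0:ℝ) l,
      (tg s / kg s ^ 2) * (2 * kg s ^ 3 * tg s - icD l kg s * icD l tg s
          + kg s * icD l (icD l tg) s)
        - icD l (fun u => (tg u / kg u ^ 2) *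
            (3 * kg u * icD l tg u - 2 * tg u * icD l kg u)) s
        + 2 * icD l (icD l (fun u => tg u ^ 2 / kg u)) s = 0)
    (hbc : tg l = 0) :
    RelaxedDE l kg kn tg (tauOf l kg kn tg) ∧
    RelaxedBC1 l kg kn tg (tauOf l kg kn tg) ∧
    RelaxedBC2 l kg kn tg (tauOf l kg kn tg) ∧
    RelaxedBC3 l kn (tauOf l kg kn tg) := by
  have hI : UniqueDiffOn ℝ (Set.Icc (0:ℝ) l) := uniqueDiffOn_Icc hl
  have hlmem : l ∈ Set.Icc (0:ℝ) l := ⟨hl.le, le_refl l⟩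
  have hkg0 : ∀ s ∈ Set.Icc (0:ℝ) l, kg s ≠ 0 := by
    intro s hs hzero
    exact (hκ s hs) (by simp [kappaSq, hasym s hs, hzero])
  have hz : ∀ f : ℝ → ℝ, (∀ u ∈ Set.Icc (0:ℝ) l, f u = 0) →
      ∀ u ∈ Set.Icc (0:ℝ) l, icD l f u = 0 := by
    intro f hf u hu
    rw [icD, derivWithin_congr (fun y hy => hf y hy) (hf u hu),
      derivWithin_fun_const, Pi.zero_apply]
  have hicDkn : ∀ u ∈ Set.Icc (0:ℝ) l, icD l kn u = 0 := hz kn hasym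
  have htg0 : ∀ s ∈ Set.Icc (0:ℝ) l, tg s = 0 :=
    tg_zero l hl kg tg hkg htg hkg0 (key_identity l hl kg tg hkg htg hkg0 hDE) hbc
  have hτ : ∀ u ∈ Set.Icc (0:ℝ) l, tauOf l kg kn tg u = 0 := by
    intro u hu
    simp [tauOf, htg0 u hu, hasym u hu, hicDkn u hu]
  have hf3 : ∀ u ∈ Set.Icc (0:ℝ) l,
      kn u * tauOf l kg kn tg u / kappaSq kg kn u = 0 := by
    intro u hu
    simp [hasym u hu]
  have hf3' := hz _ hf3
  have hf3'' := hz _ hf3'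
  have hf3''' := hz _ hf3''
  refine ⟨?_, ?_, ?_, ?_⟩
  · intro s hs
    have e1 := hz (fun u => (tauOf l kg kn tg u / kappaSq kg kn u) *
          (-(kn u * kappaSq kg kn u) + 5 * kn u * tg u ^ 2 - 2 * tg u * icD l kg u
            + 3 * kg u * icD l tg u - 4 * kn u * tg u * tauOf l kg kn tg u))
      (fun u hu => by simp [hτ u hu]) s hs
    have e2 := hz _ (hz (fun u => (tauOf l kg kn tg u / kappaSq kg kn u) *
          (icD l kn u + kn u * tg u + 3 * kg u * tg u - kg u * tauOf l kg kn tg u))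
      (fun u hu => by simp [hτ u hu])) s hs
    have e3 := hf3''' s hs
    rw [e1, e2, e3, hτ s hs, hτ l hlmem]
    ring
  · have e1 := hz (fun u => (tauOf l kg kn tg u / kappaSq kg kn u) *
          (icD l kn u + 3 * kg u * tg u + kn u * tg u - kg u * tauOf l kg kn tg u))
      (fun u hu => by simp [hτ u hu]) l hlmem
    have e2 := hf3'' l hlmem
    unfold RelaxedBC1
    rw [e1, e2, hτ l hlmem]
    ring
  · have e1 := hf3' l hlmem
    unfold RelaxedBC2
    rw [e1, hτ l hlmem]
    ring
  · unfold RelaxedBC3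
    rw [hasym l hlmem, zero_mul]
end
end
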